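/- arXiv:2407.09794 — 2 statements merged into one kernel-verified Lean document; each statement's English description precedes it below -/
import Mathlib

section
/- Let u:ℤ³→ℝ satisfy ∑_x(|∇u|²(x)+u(x)²)<∞, and let s,t>0. Then ∑_{x∈ℤ³}|∇(su⁺+tu⁻)|²(x)=∑_{x∈ℤ³}|∇(su⁺)|²(x)+∑_{x∈ℤ³}|∇(tu⁻)|²(x)−st·K_V(u), where all sums converge absolutely, and moreover K_V(u)≤0. -/
open scoped BigOperators
open Filter

namespace DiscreteKirchhoff

/-- Vertices of the lattice graph ℤ³. -/
abbrev V := Fin 3 → ℤ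

/-- Adjacency on ℤ³: x ∼ y iff ∑ᵢ |xᵢ - yᵢ| = 1. -/
def adj (x y : V) : Prop := (∑ i, |x i - y i|) = 1

instance (x y : V) : Decidable (adj x y) :=
  inferInstanceAs (Decidable ((∑ i, |x i - y i|) = 1))

/-- Graph Laplacian: Δu(x) = ∑_{y∼x} (u(y) - u(x)). -/
noncomputable def lap (u : V → ℝ) (x : V) : ℝ :=
  ∑' y : V, if adj x y then u y - u x else 0

/-- Gradient form: ∇u∇v(x) = (1/2) ∑_{y∼x} (u(y)-u(x))(v(y)-v(x)). -/
noncomputable def gradForm (u v : V → ℝ) (x : V) : ℝ :=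
  (1/2) * ∑' y : V, if adj x y then (u y - u x) * (v y - v x) else 0

/-- |∇u|²(x). -/
noncomputable def gradSq (u : V → ℝ) (x : V) : ℝ := gradForm u u x

/-- Positive part u⁺ = max(u,0). -/
noncomputable def pos (u : V → ℝ) : V → ℝ := fun x => max (u x) 0

/-- Negative part u⁻ = min(u,0). -/
noncomputable def neg (u : V → ℝ) : V → ℝ := fun x => min (u x) 0

/-- K_V(u) = ∑_x ∑_{y∼x} [u⁺(x)u⁻(y) + u⁻(x)u⁺(y)]. -/
noncomputable def KV (u : V → ℝ) : ℝ :=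
  ∑' x : V, ∑' y : V, if adj x y then pos u x * neg u y + neg u x * pos u y else 0

/-- |t|^p log t², taken to be 0 at t = 0. -/
noncomputable def logTerm (p t : ℝ) : ℝ :=
  if t = 0 then 0 else |t| ^ p * Real.log (t ^ 2)

/-- |t|^{p-2} t log t², taken to be 0 at t = 0. -/
noncomputable def nlTerm (p t : ℝ) : ℝ :=
  if t = 0 then 0 else |t| ^ (p - 2) * t * Real.log (t ^ 2)

/-- Membership in the space ℋ_λ (independent of λ > 0). -/
def memH (h u : V → ℝ) : Prop :=
  Summable (fun x => gradSq u x + (u x) ^ 2) ∧ Summable (fun x => h x * (u x) ^ 2)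

/-- h_λ(x) = λ h(x) + 1. -/
noncomputable def hl (lam : ℝ) (h : V → ℝ) (x : V) : ℝ := lam * h x + 1

/-- Squared norm in ℋ_λ. -/
noncomputable def normHlamSq (a lam : ℝ) (h u : V → ℝ) : ℝ :=
  ∑' x : V, (a * gradSq u x + hl lam h x * (u x) ^ 2)

/-- Squared H¹ norm. -/
noncomputable def normH1Sq (u : V → ℝ) : ℝ :=
  ∑' x : V, (gradSq u x + (u x) ^ 2)

/-- Inner product in ℋ_λ. -/
noncomputable def innerHlam (a lam : ℝ) (h u v : V → ℝ) : ℝ :=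
  ∑' x : V, (a * gradForm u v x + hl lam h x * u x * v x)

/-- The energy functional J_λ. -/
noncomputable def Jlam (a b p lam : ℝ) (h u : V → ℝ) : ℝ :=
  (1/2) * normHlamSq a lam h u
  + (b/4) * (∑' x : V, gradSq u x) ^ 2
  + (2/p^2) * ∑' x : V, |u x| ^ p
  - (1/p) * ∑' x : V, logTerm p (u x)

/-- The pairing (J′_λ(u), φ). -/
noncomputable def Jp (a b p lam : ℝ) (h u φ : V → ℝ) : ℝ :=
  (∑' x : V, (a * gradForm u φ x + hl lam h x * u x * φ x))
  + b * (∑' x : V, gradSq u x) * (∑' x : V, gradForm u φ x)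
  - ∑' x : V, nlTerm p (u x) * φ x

/-- The Nehari manifold N_λ. -/
def NSet (a b p lam : ℝ) (h : V → ℝ) : Set (V → ℝ) :=
  {u | memH h u ∧ u ≠ 0 ∧ Jp a b p lam h u u = 0}

/-- The sign-changing Nehari set M_λ. -/
def MSet (a b p lam : ℝ) (h : V → ℝ) : Set (V → ℝ) :=
  {u | memH h u ∧ pos u ≠ 0 ∧ neg u ≠ 0 ∧
       Jp a b p lam h u (pos u) = 0 ∧ Jp a b p lam h u (neg u) = 0}

/-- c_λ = inf_{N_λ} J_λ. -/
noncomputable def cLam (a b p lam : ℝ) (h : V → ℝ) : ℝ :=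
  sInf (Jlam a b p lam h '' NSet a b p lam h)

/-- m_λ = inf_{M_λ} J_λ. -/
noncomputable def mLam (a b p lam : ℝ) (h : V → ℝ) : ℝ :=
  sInf (Jlam a b p lam h '' MSet a b p lam h)

/-- Graph-connectedness of a subset of ℤ³. -/
def connectedIn (S : Set V) : Prop :=
  ∀ x ∈ S, ∀ y ∈ S, Relation.ReflTransGen (fun z w => adj z w ∧ w ∈ S) x y

/-- Hypothesis (h₁): h ≥ 0 and Ω = {h = 0} is nonempty, connected and finite. -/
def hypH1 (h : V → ℝ) : Prop :=
  (∀ x, 0 ≤ h x) ∧ {x | h x = 0}.Nonempty ∧ connectedIn {x | h x = 0} ∧ {x | h x = 0}.Finite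

/-- Hypothesis (h₂): the sublevel set {h < M} is finite for some M > 0. -/
def hypH2 (h : V → ℝ) : Prop :=
  ∃ M > 0, {x | h x < M}.Finite

/-- u solves the discrete logarithmic Kirchhoff equation pointwise on ℤ³. -/
def solvesEq (a b p lam : ℝ) (h u : V → ℝ) : Prop :=
  ∀ x : V, -(a + b * ∑' y : V, gradSq u y) * lap u x + hl lam h x * u x = nlTerm p (u x)

/-- Vertex boundary of a subset of ℤ³. -/
def bdry (S : Set V) : Set V := {y | y ∉ S ∧ ∃ x ∈ S, adj x y}

/-- ℋ¹₀(Ω): functions vanishing outside Ω. -/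
def H10 (S : Set V) : Set (V → ℝ) := {u | ∀ x, x ∉ S → u x = 0}

/-- The energy functional J_Ω. -/
noncomputable def JOm (a b p : ℝ) (S : Set V) (u : V → ℝ) : ℝ :=
  (1/2) * ∑' x : V, (S ∪ bdry S).indicator (fun x => a * gradSq u x) x
  + (1/2) * ∑' x : V, S.indicator (fun x => (u x) ^ 2) x
  + (b/4) * (∑' x : V, (S ∪ bdry S).indicator (gradSq u) x) ^ 2
  + (2/p^2) * ∑' x : V, S.indicator (fun x => |u x| ^ p) x
  - (1/p) * ∑' x : V, S.indicator (fun x => logTerm p (u x)) x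

/-- The pairing (J′_Ω(u), φ). -/
noncomputable def JOmp (a b p : ℝ) (S : Set V) (u φ : V → ℝ) : ℝ :=
  (∑' x : V, (S ∪ bdry S).indicator (fun x => a * gradForm u φ x) x)
  + (∑' x : V, S.indicator (fun x => u x * φ x) x)
  + b * (∑' x : V, (S ∪ bdry S).indicator (gradSq u) x)
      * (∑' x : V, (S ∪ bdry S).indicator (gradForm u φ) x)
  - ∑' x : V, S.indicator (fun x => nlTerm p (u x) * φ x) x

/-- The Nehari manifold N_Ω. -/
def NOm (a b p : ℝ) (S : Set V) : Set (V → ℝ) :=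
  {u | u ∈ H10 S ∧ u ≠ 0 ∧ JOmp a b p S u u = 0}

/-- The sign-changing Nehari set M_Ω. -/
def MOm (a b p : ℝ) (S : Set V) : Set (V → ℝ) :=
  {u | u ∈ H10 S ∧ pos u ≠ 0 ∧ neg u ≠ 0 ∧
       JOmp a b p S u (pos u) = 0 ∧ JOmp a b p S u (neg u) = 0}

/-- c_Ω. -/
noncomputable def cOm (a b p : ℝ) (S : Set V) : ℝ :=
  sInf (JOm a b p S '' NOm a b p S)

/-- m_Ω. -/
noncomputable def mOm (a b p : ℝ) (S : Set V) : ℝ :=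
  sInf (JOm a b p S '' MOm a b p S)

/-- u solves the limiting equation pointwise on Ω. -/
def solvesEqOm (a b p : ℝ) (S : Set V) (u : V → ℝ) : Prop :=
  ∀ x ∈ S, -(a + b * ∑' y : V, (S ∪ bdry S).indicator (gradSq u) y) * lap u x + u x
      = nlTerm p (u x)


/- ===== auxiliary lemmas ===== -/

lemma adj_finite (x : V) : {y : V | adj x y}.Finite := by
  have hsub : {y : V | adj x y} ⊆ Set.pi Set.univ (fun i => Set.Icc (x i - 1) (x i + 1)) := by
    intro y hy i _
    have h1 : |x i - y i| ≤ 1 := by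
      calc |x i - y i| ≤ ∑ j, |x j - y j| :=
            Finset.single_le_sum (f := fun j => |x j - y j|) (fun j _ => abs_nonneg _)
              (Finset.mem_univ i)
        _ = 1 := hy
    have := abs_le.mp h1
    simp only [Set.mem_Icc]
    omega
  exact (Set.Finite.pi (fun i => Set.finite_Icc _ _)).subset hsub

lemma summable_ite (x : V) (f : V → ℝ) : Summable (fun y => if adj x y then f y else 0) := by
  apply summable_of_ne_finset_zero (s := (adj_finite x).toFinset)
  intro y hy
  rw [Set.Finite.mem_toFinset] at hy
  simp only [Set.mem_setOf_eq] at hy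
  simp [hy]

lemma edge_eq (s t a b c d : ℝ) (hab : a*b = 0) (hcd : c*d = 0) :
    ((s*c + t*d) - (s*a + t*b)) * ((s*c + t*d) - (s*a + t*b))
      = (s*c - s*a) * (s*c - s*a) + (t*d - t*b) * (t*d - t*b)
        + (-2*s*t) * (a*d + b*c) := by
  linear_combination (2*s*t)*hcd + (2*s*t)*hab

lemma base1 (a b c d : ℝ) (hab : a*b = 0) (hcd : c*d = 0)
    (had : a*d ≤ 0) (hbc : b*c ≤ 0) :
    (c - a) * (c - a) ≤ ((c+d) - (a+b)) * ((c+d) - (a+b)) := by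
  nlinarith [sq_nonneg (d - b)]

lemma base2 (a b c d : ℝ) (hab : a*b = 0) (hcd : c*d = 0)
    (had : a*d ≤ 0) (hbc : b*c ≤ 0) :
    (d - b) * (d - b) ≤ ((c+d) - (a+b)) * ((c+d) - (a+b)) := by
  nlinarith [sq_nonneg (c - a)]

lemma base3 (a b c d : ℝ) (hab : a*b = 0) (hcd : c*d = 0)
    (had : a*d ≤ 0) (hbc : b*c ≤ 0) :
    -(a*d + b*c) ≤ ((c+d) - (a+b)) * ((c+d) - (a+b)) := by
  nlinarith [sq_nonneg (c - a), sq_nonneg (d - b)]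

lemma baseW (s t a b c d : ℝ) (hs : 0 ≤ s) (ht : 0 ≤ t)
    (hab : a*b = 0) (hcd : c*d = 0) (had : a*d ≤ 0) (hbc : b*c ≤ 0) :
    ((s*c + t*d) - (s*a + t*b)) * ((s*c + t*d) - (s*a + t*b))
      ≤ (s+t)^2 * (((c+d) - (a+b)) * ((c+d) - (a+b))) := by
  nlinarith [mul_le_mul_of_nonneg_left (base1 a b c d hab hcd had hbc) (mul_nonneg hs hs),
    mul_le_mul_of_nonneg_left (base2 a b c d hab hcd had hbc) (mul_nonneg ht ht),
    mul_le_mul_of_nonneg_left (base3 a b c d hab hcd had hbc) (by positivity : (0:ℝ) ≤ 2*s*t),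
    edge_eq s t a b c d hab hcd]

lemma pos_mul_neg (u : V → ℝ) (x : V) : pos u x * neg u x = 0 := by
  rcases le_total (u x) 0 with h | h
  · simp [pos, max_eq_right h]
  · simp [neg, min_eq_right h]

lemma pos_nonneg (u : V → ℝ) (x : V) : 0 ≤ pos u x := le_max_right _ _
lemma neg_nonpos (u : V → ℝ) (x : V) : neg u x ≤ 0 := min_le_right _ _
lemma pos_add_neg (u : V → ℝ) (x : V) : pos u x + neg u x = u x := by
  simp [pos, neg, max_add_min]

lemma gradSq_nonneg (u : V → ℝ) (x : V) : 0 ≤ gradSq u x := by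
  unfold gradSq gradForm
  have h : 0 ≤ ∑' y : V, if adj x y then (u y - u x) * (u y - u x) else 0 :=
    tsum_nonneg fun y => by
      by_cases h : adj x y
      · simpa [h] using mul_self_nonneg (u y - u x)
      · simp [h]
  linarith

/-- pointwise splitting of `gradSq` -/
lemma gradSq_split (u : V → ℝ) (s t : ℝ) (x : V) :
    gradSq (fun y => s * pos u y + t * neg u y) x
      = gradSq (fun y => s * pos u y) x + gradSq (fun y => t * neg u y) x
        - s * t * ∑' y : V, (if adj x y then pos u x * neg u y + neg u x * pos u y else 0) := by
  unfold gradSq gradForm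
  have key : ∀ y : V,
      (if adj x y then ((s * pos u y + t * neg u y) - (s * pos u x + t * neg u x)) *
          ((s * pos u y + t * neg u y) - (s * pos u x + t * neg u x)) else 0)
        = (if adj x y then (s * pos u y - s * pos u x) * (s * pos u y - s * pos u x) else 0)
          + ((if adj x y then (t * neg u y - t * neg u x) * (t * neg u y - t * neg u x) else 0)
          + (-2*s*t) * (if adj x y then pos u x * neg u y + neg u x * pos u y else 0)) := by
    intro y
    by_cases h : adj x y
    · simp only [h, if_true]
      have := edge_eq s t (pos u x) (neg u x) (pos u y) (neg u y)
        (pos_mul_neg u x) (pos_mul_neg u y)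
      linarith
    · simp [h]
  rw [tsum_congr key,
    Summable.tsum_add (summable_ite x _)
      ((summable_ite x _).add ((summable_ite x _).mul_left _)),
    Summable.tsum_add (summable_ite x _) ((summable_ite x _).mul_left _),
    tsum_mul_left]
  ring

lemma inner_nonpos (u : V → ℝ) (x y : V) :
    pos u x * neg u y + neg u x * pos u y ≤ 0 := by
  have h1 : pos u x * neg u y ≤ 0 :=
    mul_nonpos_of_nonneg_of_nonpos (pos_nonneg u x) (neg_nonpos u y)
  have h2 : neg u x * pos u y ≤ 0 :=
    mul_nonpos_of_nonpos_of_nonneg (neg_nonpos u x) (pos_nonneg u y)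
  linarith

lemma tsum_sq_eq (u : V → ℝ) (x : V) :
    (∑' y : V, if adj x y then (u y - u x) * (u y - u x) else 0) = 2 * gradSq u x := by
  unfold gradSq gradForm; ring


lemma baseA (s a b c d : ℝ) (hab : a*b = 0) (hcd : c*d = 0)
    (had : a*d ≤ 0) (hbc : b*c ≤ 0) :
    (s*c - s*a) * (s*c - s*a) ≤ s^2 * (((c+d) - (a+b)) * ((c+d) - (a+b))) := by
  nlinarith [mul_le_mul_of_nonneg_left (base1 a b c d hab hcd had hbc) (sq_nonneg s)]

lemma baseB (t a b c d : ℝ) (hab : a*b = 0) (hcd : c*d = 0)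
    (had : a*d ≤ 0) (hbc : b*c ≤ 0) :
    (t*d - t*b) * (t*d - t*b) ≤ t^2 * (((c+d) - (a+b)) * ((c+d) - (a+b))) := by
  nlinarith [mul_le_mul_of_nonneg_left (base2 a b c d hab hcd had hbc) (sq_nonneg t)]


/-- splitting of the Dirichlet energy of su⁺ + tu⁻ and K_V(u) ≤ 0. -/
theorem stmt3 (u : V → ℝ) (hu : Summable (fun x => gradSq u x + (u x) ^ 2))
    (s t : ℝ) (hs : 0 < s) (ht : 0 < t) :
    Summable (fun x => gradSq (fun y => s * pos u y + t * neg u y) x) ∧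
    Summable (fun x => gradSq (fun y => s * pos u y) x) ∧
    Summable (fun x => gradSq (fun y => t * neg u y) x) ∧
    Summable (fun x : V =>
      ∑' y : V, if adj x y then pos u x * neg u y + neg u x * pos u y else 0) ∧
    (∑' x : V, gradSq (fun y => s * pos u y + t * neg u y) x)
      = (∑' x : V, gradSq (fun y => s * pos u y) x)
        + (∑' x : V, gradSq (fun y => t * neg u y) x) - s * t * KV u ∧
    KV u ≤ 0 := by
  classical
  -- abbreviations
  have hPN : ∀ y, pos u y + neg u y = u y := pos_add_neg u
  set W : V → ℝ := fun y => s * pos u y + t * neg u y with hWdef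
  set A : V → ℝ := fun y => s * pos u y with hAdef
  set B : V → ℝ := fun y => t * neg u y with hBdef
  set g : V → ℝ := fun x => ∑' y : V,
      (if adj x y then pos u x * neg u y + neg u x * pos u y else 0) with hgdef
  have hgradu : Summable (fun x => gradSq u x) :=
    Summable.of_nonneg_of_le (fun x => gradSq_nonneg u x)
      (fun x => le_add_of_nonneg_right (sq_nonneg _)) hu
  -- pointwise comparison lemmas
  have hA_le : ∀ x, gradSq A x ≤ s^2 * gradSq u x := by
    intro x
    have h2 : (∑' y : V, if adj x y then (A y - A x) * (A y - A x) else 0)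
        ≤ s^2 * (2 * gradSq u x) := by
      calc (∑' y : V, if adj x y then (A y - A x) * (A y - A x) else 0)
          ≤ ∑' y : V, (s^2 * (if adj x y then (u y - u x) * (u y - u x) else 0)) := by
            refine Summable.tsum_le_tsum (fun y => ?_) (summable_ite x _)
              ((summable_ite x _).mul_left _)
            by_cases h : adj x y
            · simp only [h, if_true, hAdef]
              rw [← hPN y, ← hPN x]
              exact baseA s (pos u x) (neg u x) (pos u y) (neg u y)
                (pos_mul_neg u x) (pos_mul_neg u y)
                (mul_nonpos_of_nonneg_of_nonpos (pos_nonneg u x) (neg_nonpos u y))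
                (mul_nonpos_of_nonpos_of_nonneg (neg_nonpos u x) (pos_nonneg u y))
            · simp [h]
        _ = s^2 * ∑' y : V, (if adj x y then (u y - u x) * (u y - u x) else 0) :=
            tsum_mul_left
        _ = s^2 * (2 * gradSq u x) := by rw [tsum_sq_eq]
    have : gradSq A x = (1/2) * ∑' y : V, (if adj x y then (A y - A x) * (A y - A x) else 0) := rfl
    rw [this]; linarith
  have hB_le : ∀ x, gradSq B x ≤ t^2 * gradSq u x := by
    intro x
    have h2 : (∑' y : V, if adj x y then (B y - B x) * (B y - B x) else 0)
        ≤ t^2 * (2 * gradSq u x) := by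
      calc (∑' y : V, if adj x y then (B y - B x) * (B y - B x) else 0)
          ≤ ∑' y : V, (t^2 * (if adj x y then (u y - u x) * (u y - u x) else 0)) := by
            refine Summable.tsum_le_tsum (fun y => ?_) (summable_ite x _)
              ((summable_ite x _).mul_left _)
            by_cases h : adj x y
            · simp only [h, if_true, hBdef]
              rw [← hPN y, ← hPN x]
              exact baseB t (pos u x) (neg u x) (pos u y) (neg u y)
                (pos_mul_neg u x) (pos_mul_neg u y)
                (mul_nonpos_of_nonneg_of_nonpos (pos_nonneg u x) (neg_nonpos u y))
                (mul_nonpos_of_nonpos_of_nonneg (neg_nonpos u x) (pos_nonneg u y))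
            · simp [h]
        _ = t^2 * ∑' y : V, (if adj x y then (u y - u x) * (u y - u x) else 0) :=
            tsum_mul_left
        _ = t^2 * (2 * gradSq u x) := by rw [tsum_sq_eq]
    have : gradSq B x = (1/2) * ∑' y : V, (if adj x y then (B y - B x) * (B y - B x) else 0) := rfl
    rw [this]; linarith
  have hW_le : ∀ x, gradSq W x ≤ (s+t)^2 * gradSq u x := by
    intro x
    have h2 : (∑' y : V, if adj x y then (W y - W x) * (W y - W x) else 0)
        ≤ (s+t)^2 * (2 * gradSq u x) := by
      calc (∑' y : V, if adj x y then (W y - W x) * (W y - W x) else 0)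
          ≤ ∑' y : V, ((s+t)^2 * (if adj x y then (u y - u x) * (u y - u x) else 0)) := by
            refine Summable.tsum_le_tsum (fun y => ?_) (summable_ite x _)
              ((summable_ite x _).mul_left _)
            by_cases h : adj x y
            · simp only [h, if_true, hWdef]
              rw [← hPN y, ← hPN x]
              exact baseW s t (pos u x) (neg u x) (pos u y) (neg u y) hs.le ht.le
                (pos_mul_neg u x) (pos_mul_neg u y)
                (mul_nonpos_of_nonneg_of_nonpos (pos_nonneg u x) (neg_nonpos u y))
                (mul_nonpos_of_nonpos_of_nonneg (neg_nonpos u x) (pos_nonneg u y))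
            · simp [h]
        _ = (s+t)^2 * ∑' y : V, (if adj x y then (u y - u x) * (u y - u x) else 0) :=
            tsum_mul_left
        _ = (s+t)^2 * (2 * gradSq u x) := by rw [tsum_sq_eq]
    have : gradSq W x = (1/2) * ∑' y : V, (if adj x y then (W y - W x) * (W y - W x) else 0) := rfl
    rw [this]; linarith
  -- summabilities
  have hSA : Summable (fun x => gradSq A x) :=
    Summable.of_nonneg_of_le (fun x => gradSq_nonneg A x) hA_le (hgradu.mul_left _)
  have hSB : Summable (fun x => gradSq B x) :=
    Summable.of_nonneg_of_le (fun x => gradSq_nonneg B x) hB_le (hgradu.mul_left _)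
  have hSW : Summable (fun x => gradSq W x) :=
    Summable.of_nonneg_of_le (fun x => gradSq_nonneg W x) hW_le (hgradu.mul_left _)
  have hgneg : ∀ x, -g x = ∑' y : V,
      (if adj x y then -(pos u x * neg u y + neg u x * pos u y) else 0) := by
    intro x
    rw [hgdef]
    rw [← tsum_neg]
    exact tsum_congr fun y => by by_cases h : adj x y <;> simp [h]
  have hgnn : ∀ x, 0 ≤ -g x := by
    intro x
    rw [hgneg x]
    refine tsum_nonneg fun y => ?_
    by_cases h : adj x y
    · simp only [h, if_true]
      have := inner_nonpos u x y
      linarith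
    · simp [h]
  have hg_le : ∀ x, -g x ≤ 2 * gradSq u x := by
    intro x
    rw [hgneg x]
    calc (∑' y : V, if adj x y then -(pos u x * neg u y + neg u x * pos u y) else 0)
        ≤ ∑' y : V, (if adj x y then (u y - u x) * (u y - u x) else 0) := by
          refine Summable.tsum_le_tsum (fun y => ?_) (summable_ite x _) (summable_ite x _)
          by_cases h : adj x y
          · simp only [h, if_true]
            rw [← hPN y, ← hPN x]
            exact base3 (pos u x) (neg u x) (pos u y) (neg u y)
              (pos_mul_neg u x) (pos_mul_neg u y)
              (mul_nonpos_of_nonneg_of_nonpos (pos_nonneg u x) (neg_nonpos u y))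
              (mul_nonpos_of_nonpos_of_nonneg (neg_nonpos u x) (pos_nonneg u y))
          · simp [h]
      _ = 2 * gradSq u x := tsum_sq_eq u x
  have hSgneg : Summable (fun x => -g x) :=
    Summable.of_nonneg_of_le hgnn hg_le (hgradu.mul_left 2)
  have hSg : Summable g := by simpa using hSgneg.neg
  -- the pointwise splitting
  have hsplit : ∀ x, gradSq W x = gradSq A x + gradSq B x - s * t * g x := by
    intro x
    exact gradSq_split u s t x
  -- KV u = ∑' g
  have hKV : KV u = ∑' x, g x := rfl
  refine ⟨hSW, hSA, hSB, hSg, ?_, ?_⟩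
  · calc (∑' x, gradSq W x)
        = ∑' x, (gradSq A x + gradSq B x - s * t * g x) := tsum_congr hsplit
      _ = (∑' x, (gradSq A x + gradSq B x)) - ∑' x, (s * t * g x) :=
          Summable.tsum_sub (hSA.add hSB) (hSg.mul_left _)
      _ = ((∑' x, gradSq A x) + ∑' x, gradSq B x) - s * t * ∑' x, g x := by
          rw [Summable.tsum_add hSA hSB, tsum_mul_left]
      _ = (∑' x, gradSq A x) + (∑' x, gradSq B x) - s * t * KV u := by rw [hKV]
  · have h0 : 0 ≤ ∑' x, -g x := tsum_nonneg hgnn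
    rw [tsum_neg] at h0
    rw [hKV]
    linarith


end DiscreteKirchhoff
end

section
/- Let a,b>0, p>6, λ>0, h≥0 a potential. Let u∈ℋ_λ with u⁺≢0 and u⁻≢0 satisfy (J′_λ(u),u⁺)≤0 and (J′_λ(u),u⁻)≤0. Then the unique pair (s_u,t_u)∈(0,∞)² with s_uu⁺+t_uu⁻∈M_λ satisfies s_u∈(0,1] and t_u∈(0,1]; moreover, equality s_u=t_u=1 holds if and only if (J′_λ(u),u⁺)=(J′_λ(u),u⁻)=0. -/
open scoped BigOperators
open Filter

namespace DiscreteKirchhoff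

section Aux

/-- The finite box of potential neighbours of `x`. -/
def nbr (x : V) : Finset V :=
  Fintype.piFinset (fun i => ({x i - 1, x i, x i + 1} : Finset ℤ))

lemma adj_mem_nbr {x y : V} (hxy : adj x y) : y ∈ nbr x := by
  rw [nbr, Fintype.mem_piFinset]
  intro i
  have h1 : |x i - y i| ≤ 1 := by
    rw [← hxy]
    exact Finset.single_le_sum (f := fun j => |x j - y j|)
      (fun j _ => abs_nonneg _) (Finset.mem_univ i)
  rw [abs_le] at h1
  simp only [Finset.mem_insert, Finset.mem_singleton]
  omega

lemma gradForm_eq (u v : V → ℝ) (x : V) :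
    gradForm u v x
      = (1/2) * ∑ y ∈ nbr x, (if adj x y then (u y - u x) * (v y - v x) else 0) := by
  unfold gradForm
  congr 1
  exact tsum_eq_sum (fun y hy => if_neg (fun h => hy (adj_mem_nbr h)))

lemma gradForm_combo (f g : V → ℝ) (s t c d : ℝ) (x : V) :
    gradForm (fun y => s * f y + t * g y) (fun y => c * f y + d * g y) x
      = (s*c) * gradSq f x + (s*d + t*c) * gradForm f g x + (t*d) * gradSq g x := by
  simp only [gradSq, gradForm_eq]
  have key : ∀ y ∈ nbr x,
      (if adj x y then ((s*f y + t*g y) - (s*f x + t*g x)) * ((c*f y + d*g y) - (c*f x + d*g x)) else 0)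
      = (s*c) * (if adj x y then (f y - f x)*(f y - f x) else 0)
        + (s*d+t*c) * (if adj x y then (f y - f x)*(g y - g x) else 0)
        + (t*d) * (if adj x y then (g y - g x)*(g y - g x) else 0) := by
    intro y _; by_cases hxy : adj x y <;> simp [hxy] <;> ring
  rw [Finset.sum_congr rfl key, Finset.sum_add_distrib, Finset.sum_add_distrib,
      ← Finset.mul_sum, ← Finset.mul_sum, ← Finset.mul_sum]
  ring

lemma gradForm_comm (u v : V → ℝ) (x : V) : gradForm u v x = gradForm v u x := by
  rw [gradForm_eq, gradForm_eq]
  congr 1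
  exact Finset.sum_congr rfl fun y _ => by by_cases hxy : adj x y <;> simp [hxy] <;> ring

lemma gradSq_mono (v w : V → ℝ) (hvw : ∀ y z : V, |v y - v z| ≤ |w y - w z|) (x : V) :
    gradSq v x ≤ gradSq w x := by
  simp only [gradSq, gradForm_eq]
  refine mul_le_mul_of_nonneg_left ?_ (by norm_num)
  refine Finset.sum_le_sum fun y _ => ?_
  by_cases hxy : adj x y
  · simp only [if_pos hxy]
    rw [← abs_mul_abs_self (v y - v x), ← abs_mul_abs_self (w y - w x)]
    exact mul_self_le_mul_self (abs_nonneg _) (hvw y x)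
  · simp [hxy]

lemma pos_sub_abs (u : V → ℝ) (y z : V) : |pos u y - pos u z| ≤ |u y - u z| :=
  abs_max_sub_max_le_abs _ _ _

lemma neg_sub_abs (u : V → ℝ) (y z : V) : |neg u y - neg u z| ≤ |u y - u z| := by
  have h := abs_max_sub_max_le_abs (-u y) (-u z) (-0 : ℝ)
  rw [max_neg_neg, max_neg_neg] at h
  calc |neg u y - neg u z| = |-(min (u y) 0) - -(min (u z) 0)| := by
        rw [neg_sub_neg, abs_sub_comm]; rfl
    _ ≤ |-u y - -u z| := h
    _ = |u y - u z| := by rw [neg_sub_neg, abs_sub_comm]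

lemma pos_sq_le (u : V → ℝ) (x : V) : pos u x ^ 2 ≤ u x ^ 2 := by
  rcases le_total (u x) 0 with h | h
  · simp [pos, max_eq_right h]; positivity
  · simp [pos, max_eq_left h]

lemma neg_sq_le (u : V → ℝ) (x : V) : neg u x ^ 2 ≤ u x ^ 2 := by
  rcases le_total (u x) 0 with h | h
  · simp [neg, min_eq_left h]
  · simp [neg, min_eq_right h]; positivity

lemma gradForm_pos_neg_nonneg (u : V → ℝ) (x : V) : 0 ≤ gradForm (pos u) (neg u) x := by
  rw [gradForm_eq]
  apply mul_nonneg (by norm_num)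
  refine Finset.sum_nonneg fun y _ => ?_
  by_cases hxy : adj x y
  · simp only [if_pos hxy]
    have h1 := pos_mul_neg u x
    have h2 := pos_mul_neg u y
    have h3 : pos u y * neg u x ≤ 0 :=
      mul_nonpos_of_nonneg_of_nonpos (pos_nonneg u y) (neg_nonpos u x)
    have h4 : pos u x * neg u y ≤ 0 :=
      mul_nonpos_of_nonneg_of_nonpos (pos_nonneg u x) (neg_nonpos u y)
    nlinarith
  · simp [hxy]

lemma gradForm_pos_neg_le (u : V → ℝ) (x : V) : gradForm (pos u) (neg u) x ≤ gradSq u x := by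
  simp only [gradSq, gradForm_eq]
  refine mul_le_mul_of_nonneg_left ?_ (by norm_num)
  refine Finset.sum_le_sum fun y _ => ?_
  by_cases hxy : adj x y
  · simp only [if_pos hxy]
    calc (pos u y - pos u x) * (neg u y - neg u x)
        ≤ |(pos u y - pos u x) * (neg u y - neg u x)| := le_abs_self _
      _ = |pos u y - pos u x| * |neg u y - neg u x| := abs_mul _ _
      _ ≤ |u y - u x| * |u y - u x| :=
          mul_le_mul (pos_sub_abs u y x) (neg_sub_abs u y x) (abs_nonneg _) (abs_nonneg _)
      _ = (u y - u x) * (u y - u x) := abs_mul_abs_self _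
  · simp [hxy]

end Aux
section Aux2

lemma summable_of_eventually_le {f g : V → ℝ} (hf : ∀ x, 0 ≤ f x)
    (h : ∀ᶠ x in Filter.cofinite, f x ≤ g x) (hg : Summable g) : Summable f := by
  classical
  have hs : {x : V | ¬ f x ≤ g x}.Finite := by
    simpa [Filter.eventually_cofinite] using h
  rw [← hs.summable_compl_iff]
  exact Summable.of_nonneg_of_le (fun x => hf x)
    (fun x => not_not.mp x.2) (hg.subtype _)

lemma rpow_abs_le_sq {t : ℝ} (ht : |t| ≤ 1) {p : ℝ} (hp : 2 ≤ p) : |t| ^ p ≤ t ^ 2 := by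
  rcases eq_or_ne t 0 with rfl | h
  · simp [Real.zero_rpow (by linarith : p ≠ 0)]
  · have h0 : 0 < |t| := abs_pos.mpr h
    calc |t| ^ p ≤ |t| ^ (2:ℝ) := Real.rpow_le_rpow_of_exponent_ge h0 ht hp
      _ = t ^ 2 := by rw [Real.rpow_two, sq_abs]

lemma abs_logTerm_le_sq {t : ℝ} (ht : |t| ≤ 1) {p : ℝ} (hp : 4 ≤ p) :
    |logTerm p t| ≤ t ^ 2 := by
  rcases eq_or_ne t 0 with rfl | h
  · simp [logTerm]
  · have h0 : 0 < |t| := abs_pos.mpr h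
    have h2p : (0:ℝ) < t ^ 2 := by positivity
    have ht2 : t ^ 2 ≤ 1 := by nlinarith [sq_abs t]
    rw [logTerm, if_neg h, abs_mul, abs_of_nonneg (Real.rpow_nonneg (abs_nonneg t) p)]
    have hlog : |Real.log (t ^ 2)| ≤ (t ^ 2)⁻¹ := by
      rw [abs_of_nonpos (Real.log_nonpos h2p.le ht2), ← Real.log_inv]
      have := Real.log_le_sub_one_of_pos (inv_pos.mpr h2p)
      linarith
    calc |t| ^ p * |Real.log (t ^ 2)| ≤ |t| ^ p * (t ^ 2)⁻¹ :=
          mul_le_mul_of_nonneg_left hlog (Real.rpow_nonneg (abs_nonneg t) p)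
      _ = |t| ^ (p - 2) := by
          rw [show (t:ℝ) ^ 2 = |t| ^ (2:ℝ) by rw [Real.rpow_two, sq_abs],
            Real.rpow_sub h0, div_eq_mul_inv]
      _ ≤ t ^ 2 := rpow_abs_le_sq ht (by linarith)

lemma summable_rpow {v : V → ℝ} (hv : Summable (fun x => v x ^ 2)) {p : ℝ} (hp : 2 ≤ p) :
    Summable (fun x => |v x| ^ p) := by
  refine summable_of_eventually_le (fun x => Real.rpow_nonneg (abs_nonneg _) _) ?_ hv
  filter_upwards [hv.tendsto_cofinite_zero.eventually_lt_const one_pos] with x hx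
  exact rpow_abs_le_sq (by nlinarith [sq_abs (v x), abs_nonneg (v x)]) hp

lemma summable_logTerm {v : V → ℝ} (hv : Summable (fun x => v x ^ 2)) {p : ℝ} (hp : 4 ≤ p) :
    Summable (fun x => logTerm p (v x)) := by
  rw [← summable_abs_iff]
  refine summable_of_eventually_le (fun x => abs_nonneg _) ?_ hv
  filter_upwards [hv.tendsto_cofinite_zero.eventually_lt_const one_pos] with x hx
  exact abs_logTerm_le_sq (by nlinarith [sq_abs (v x), abs_nonneg (v x)]) hp

lemma nlTerm_scale {p : ℝ} (hp0 : p ≠ 0) {s : ℝ} (hs : 0 < s) (c : ℝ) :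
    nlTerm p (s * c) * (s * c) = s ^ p * (2 * Real.log s * |c| ^ p + logTerm p c) := by
  rcases eq_or_ne c 0 with rfl | hc
  · simp [nlTerm, logTerm, Real.zero_rpow hp0]
  · have hsc : s * c ≠ 0 := mul_ne_zero hs.ne' hc
    have habs : 0 < |s * c| := abs_pos.mpr hsc
    rw [nlTerm, logTerm, if_neg hsc, if_neg hc]
    have e3 : |s*c| ^ (p-2) * (s*c) * Real.log ((s*c)^2) * (s*c)
        = |s*c| ^ p * Real.log ((s*c)^2) := by
      have h1 : (s*c) * (s*c) = |s*c| ^ (2:ℝ) := by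
        rw [Real.rpow_two, sq_abs, sq]
      have h2 : |s*c| ^ (p-2) * |s*c| ^ (2:ℝ) = |s*c| ^ p := by
        rw [← Real.rpow_add habs]; norm_num
      calc |s*c| ^ (p-2) * (s*c) * Real.log ((s*c)^2) * (s*c)
          = |s*c| ^ (p-2) * ((s*c) * (s*c)) * Real.log ((s*c)^2) := by ring
        _ = |s*c| ^ p * Real.log ((s*c)^2) := by rw [h1, h2]
    rw [e3]
    have e1 : Real.log ((s*c)^2) = 2 * (Real.log s + Real.log c) := by
      rw [Real.log_pow, Real.log_mul hs.ne' hc]; push_cast; ring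
    have e2 : Real.log (c^2) = 2 * Real.log c := by
      rw [Real.log_pow]; push_cast; ring
    have e4 : |s*c| ^ p = s ^ p * |c| ^ p := by
      rw [abs_mul, abs_of_pos hs, Real.mul_rpow hs.le (abs_nonneg c)]
    rw [e1, e2, e4]; ring

end Aux2
section Master

lemma master (a b p lam : ℝ) (hp0 : p ≠ 0) (h f g : V → ℝ)
    (hfg : ∀ x, f x * g x = 0)
    (Sf : Summable (fun x => gradSq f x)) (Sg : Summable (fun x => gradSq g x))
    (Sfg : Summable (fun x => gradForm f g x))
    (Shf : Summable (fun x => hl lam h x * f x ^ 2))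
    (SP : Summable (fun x => |f x| ^ p))
    (SL : Summable (fun x => logTerm p (f x)))
    (s t : ℝ) (hs : 0 < s) :
    Jp a b p lam h (fun x => s * f x + t * g x) (fun x => s * f x)
      = s^2 * (∑' x : V, (a * gradSq f x + hl lam h x * f x ^ 2))
        + s*t*(a * ∑' x : V, gradForm f g x)
        + b * (s^2 * (∑' x : V, gradSq f x) + 2*(s*t) * (∑' x : V, gradForm f g x)
                + t^2 * (∑' x : V, gradSq g x))
            * (s^2 * (∑' x : V, gradSq f x) + s*t * (∑' x : V, gradForm f g x))
        - s^p * (2 * Real.log s * (∑' x : V, |f x| ^ p) + ∑' x : V, logTerm p (f x)) := by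
  have hphi : (fun x => s * f x) = (fun y => s * f y + 0 * g y) := funext fun y => by ring
  rw [hphi, Jp]
  have comp1 : (∑' x : V, (a * gradForm (fun y => s * f y + t * g y) (fun y => s * f y + 0 * g y) x
        + hl lam h x * (s * f x + t * g x) * (s * f x + 0 * g x)))
      = s^2 * (∑' x : V, (a * gradSq f x + hl lam h x * f x ^ 2))
        + (s*t) * (a * ∑' x : V, gradForm f g x) := by
    have pt : ∀ x : V, a * gradForm (fun y => s * f y + t * g y) (fun y => s * f y + 0 * g y) x
        + hl lam h x * (s * f x + t * g x) * (s * f x + 0 * g x)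
        = s^2 * (a * gradSq f x + hl lam h x * f x ^ 2) + (s*t) * (a * gradForm f g x) := by
      intro x
      rw [gradForm_combo]
      have : hl lam h x * (s * f x + t * g x) * (s * f x + 0 * g x)
          = s^2 * (hl lam h x * f x ^ 2) + (s*t) * (hl lam h x * (f x * g x)) := by ring
      rw [this, hfg x]
      ring
    rw [tsum_congr pt,
      Summable.tsum_add (((Sf.mul_left a).add Shf).mul_left (s^2)) (((Sfg.mul_left a)).mul_left (s*t)),
      tsum_mul_left, tsum_mul_left, tsum_mul_left (a := a)]
  have comp2 : (∑' x : V, gradSq (fun y => s * f y + t * g y) x)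
      = s^2 * (∑' x : V, gradSq f x) + (2*(s*t)) * (∑' x : V, gradForm f g x)
        + t^2 * (∑' x : V, gradSq g x) := by
    have pt : ∀ x : V, gradSq (fun y => s * f y + t * g y) x
        = s^2 * gradSq f x + (2*(s*t)) * gradForm f g x + t^2 * gradSq g x := by
      intro x
      rw [show gradSq (fun y => s * f y + t * g y) x
          = gradForm (fun y => s * f y + t * g y) (fun y => s * f y + t * g y) x from rfl,
        gradForm_combo]
      ring
    rw [tsum_congr pt,
      Summable.tsum_add ((Sf.mul_left (s^2)).add (Sfg.mul_left (2*(s*t)))) (Sg.mul_left (t^2)),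
      Summable.tsum_add (Sf.mul_left (s^2)) (Sfg.mul_left (2*(s*t))),
      tsum_mul_left, tsum_mul_left, tsum_mul_left]
  have comp3 : (∑' x : V, gradForm (fun y => s * f y + t * g y) (fun y => s * f y + 0 * g y) x)
      = s^2 * (∑' x : V, gradSq f x) + (s*t) * (∑' x : V, gradForm f g x) := by
    have pt : ∀ x : V, gradForm (fun y => s * f y + t * g y) (fun y => s * f y + 0 * g y) x
        = s^2 * gradSq f x + (s*t) * gradForm f g x := by
      intro x; rw [gradForm_combo]; ring
    rw [tsum_congr pt, Summable.tsum_add (Sf.mul_left (s^2)) (Sfg.mul_left (s*t)),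
      tsum_mul_left, tsum_mul_left]
  have comp4 : (∑' x : V, nlTerm p (s * f x + t * g x) * (s * f x + 0 * g x))
      = s^p * (2 * Real.log s * (∑' x : V, |f x| ^ p) + ∑' x : V, logTerm p (f x)) := by
    have pt : ∀ x : V, nlTerm p (s * f x + t * g x) * (s * f x + 0 * g x)
        = s^p * (2 * Real.log s * |f x| ^ p + logTerm p (f x)) := by
      intro x
      rcases eq_or_ne (f x) 0 with hf0 | hf0
      · simp [hf0, nlTerm, logTerm, Real.zero_rpow hp0]
      · have hg0 : g x = 0 := by
          rcases mul_eq_zero.mp (hfg x) with h' | h'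
          · exact absurd h' hf0
          · exact h'
        rw [hg0]
        simpa using nlTerm_scale hp0 hs (f x)
    rw [tsum_congr pt, tsum_mul_left,
      Summable.tsum_add (SP.mul_left (2 * Real.log s)) SL, tsum_mul_left]
  rw [comp1, comp2, comp3, comp4]

end Master
section Key

set_option maxHeartbeats 800000 in
lemma key_le {a b p s t A D Gp Gn P L : ℝ} (ha : 0 < a) (hb : 0 < b) (hp : 6 < p)
    (hs : 0 < s) (ht : 0 < t) (hts : t ≤ s)
    (hA : 0 < A) (hP : 0 < P) (hD : 0 ≤ D) (hGp : 0 ≤ Gp) (hGn : 0 ≤ Gn)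
    (H : A + a*D + b*(Gp+2*D+Gn)*(Gp+D) ≤ L)
    (E : s^2*A + s*t*(a*D) + b*(s^2*Gp+2*(s*t)*D+t^2*Gn)*(s^2*Gp+s*t*D)
          = s^p*(2*Real.log s*P + L)) : s ≤ 1 := by
  by_contra hs1
  push_neg at hs1
  have haD : 0 ≤ a*D := mul_nonneg ha.le hD
  have hQ : 0 ≤ b*(Gp+2*D+Gn)*(Gp+D) :=
    mul_nonneg (mul_nonneg hb.le (by linarith)) (by linarith)
  have hL : 0 < L := by linarith
  have hlog : 0 < Real.log s := Real.log_pos hs1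
  have hs4 : (0:ℝ) < s^4 := by positivity
  have hs2 : (1:ℝ) < s^2 := by nlinarith
  have h24 : s^2 < s^4 := by nlinarith [mul_pos (mul_pos hs hs) (sub_pos.mpr hs2)]
  have hst2 : s*t ≤ s^2 := by nlinarith [mul_le_mul_of_nonneg_left hts hs.le]
  have htt : t^2 ≤ s^2 := by nlinarith [mul_self_le_mul_self ht.le hts]
  have hsp4 : s^4 ≤ s^p := by
    have h4p : ((4:ℕ):ℝ) ≤ p := by push_cast; linarith
    calc s^4 = s^((4:ℕ):ℝ) := (Real.rpow_natCast s 4).symm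
      _ ≤ s^p := Real.rpow_le_rpow_of_exponent_le hs1.le h4p
  have hRHS : s^4 * L < s^p*(2*Real.log s*P + L) := by
    have h1 : s^4 * L ≤ s^p * L := mul_le_mul_of_nonneg_right hsp4 hL.le
    have h3 : (0:ℝ) < s^p := Real.rpow_pos_of_pos hs p
    nlinarith [mul_pos (mul_pos hlog hP) h3]
  have hLHS : s^2*A + s*t*(a*D) + b*(s^2*Gp+2*(s*t)*D+t^2*Gn)*(s^2*Gp+s*t*D) < s^4*L := by
    have e1 : s^2*A < s^4*A := mul_lt_mul_of_pos_right h24 hA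
    have e2 : s*t*(a*D) ≤ s^4*(a*D) :=
      mul_le_mul_of_nonneg_right (by linarith) haD
    have e3 : b*(s^2*Gp+2*(s*t)*D+t^2*Gn)*(s^2*Gp+s*t*D)
        ≤ s^4*(b*(Gp+2*D+Gn)*(Gp+D)) := by
      have f1 : s^2*Gp+2*(s*t)*D+t^2*Gn ≤ s^2*(Gp+2*D+Gn) := by
        nlinarith [mul_le_mul_of_nonneg_right hst2 hD, mul_le_mul_of_nonneg_right htt hGn]
      have f2 : s^2*Gp+s*t*D ≤ s^2*(Gp+D) := by
        nlinarith [mul_le_mul_of_nonneg_right hst2 hD]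
      have f3 : (0:ℝ) ≤ s^2*Gp+s*t*D :=
        add_nonneg (mul_nonneg (by positivity) hGp)
          (mul_nonneg (mul_nonneg hs.le ht.le) hD)
      have f4 : (0:ℝ) ≤ b*(s^2*Gp+2*(s*t)*D+t^2*Gn) := by
        have : (0:ℝ) ≤ s^2*Gp+2*(s*t)*D+t^2*Gn := by positivity
        exact mul_nonneg hb.le this
      calc b*(s^2*Gp+2*(s*t)*D+t^2*Gn)*(s^2*Gp+s*t*D)
          ≤ b*(s^2*Gp+2*(s*t)*D+t^2*Gn)*(s^2*(Gp+D)) :=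
            mul_le_mul_of_nonneg_left f2 f4
        _ ≤ b*(s^2*(Gp+2*D+Gn))*(s^2*(Gp+D)) :=
            mul_le_mul_of_nonneg_right (mul_le_mul_of_nonneg_left f1 hb.le)
              (by positivity)
        _ = s^4*(b*(Gp+2*D+Gn)*(Gp+D)) := by ring
    have h4 : s^4*(A + a*D + b*(Gp+2*D+Gn)*(Gp+D)) ≤ s^4*L :=
      mul_le_mul_of_nonneg_left H hs4.le
    nlinarith
  linarith

set_option maxHeartbeats 800000 in
lemma key_eq {a b p s t A D Gp Gn P L : ℝ} (ha : 0 < a) (hb : 0 < b) (hp : 6 < p)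
    (hs : 0 < s) (ht : 0 < t) (hts : t ≤ s) (ht1 : t ≤ 1)
    (hA : 0 < A) (hP : 0 < P) (hD : 0 ≤ D) (hGp : 0 ≤ Gp) (hGn : 0 ≤ Gn)
    (H : A + a*D + b*(Gp+2*D+Gn)*(Gn+D) = L)
    (E : t^2*A + s*t*(a*D) + b*(s^2*Gp+2*(s*t)*D+t^2*Gn)*(t^2*Gn+s*t*D)
          = t^p*(2*Real.log t*P + L)) : t = 1 := by
  rcases eq_or_lt_of_le ht1 with h1 | ht1'
  · exact h1
  exfalso
  have haD : 0 ≤ a*D := mul_nonneg ha.le hD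
  have hQ : 0 ≤ b*(Gp+2*D+Gn)*(Gn+D) :=
    mul_nonneg (mul_nonneg hb.le (by linarith)) (by linarith)
  have hL : 0 < L := by linarith
  have hlog : Real.log t < 0 := Real.log_neg ht ht1'
  have ht4 : (0:ℝ) < t^4 := by positivity
  have ht2 : t^2 < 1 := by nlinarith
  have h42 : t^4 < t^2 := by nlinarith [mul_pos (mul_pos ht ht) (sub_pos.mpr ht2)]
  have hst2 : t^2 ≤ s*t := by nlinarith [mul_le_mul_of_nonneg_right hts ht.le]
  have htt : t^2 ≤ s^2 := by nlinarith [mul_self_le_mul_self ht.le hts]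
  have hLHS : t^4*L < t^2*A + s*t*(a*D) + b*(s^2*Gp+2*(s*t)*D+t^2*Gn)*(t^2*Gn+s*t*D) := by
    have e1 : t^4*A < t^2*A := mul_lt_mul_of_pos_right h42 hA
    have e2 : t^4*(a*D) ≤ s*t*(a*D) :=
      mul_le_mul_of_nonneg_right (by linarith) haD
    have e3 : t^4*(b*(Gp+2*D+Gn)*(Gn+D))
        ≤ b*(s^2*Gp+2*(s*t)*D+t^2*Gn)*(t^2*Gn+s*t*D) := by
      have f1 : t^2*(Gp+2*D+Gn) ≤ s^2*Gp+2*(s*t)*D+t^2*Gn := by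
        nlinarith [mul_le_mul_of_nonneg_right hst2 hD, mul_le_mul_of_nonneg_right htt hGp]
      have f2 : t^2*(Gn+D) ≤ t^2*Gn+s*t*D := by
        nlinarith [mul_le_mul_of_nonneg_right hst2 hD]
      have f4 : (0:ℝ) ≤ b*(t^2*(Gp+2*D+Gn)) :=
        mul_nonneg hb.le (mul_nonneg (by positivity) (by linarith))
      have f5 : (0:ℝ) ≤ t^2*Gn+s*t*D :=
        add_nonneg (mul_nonneg (by positivity) hGn)
          (mul_nonneg (mul_nonneg hs.le ht.le) hD)
      calc t^4*(b*(Gp+2*D+Gn)*(Gn+D)) = b*(t^2*(Gp+2*D+Gn))*(t^2*(Gn+D)) := by ring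
        _ ≤ b*(t^2*(Gp+2*D+Gn))*(t^2*Gn+s*t*D) := mul_le_mul_of_nonneg_left f2 f4
        _ ≤ b*(s^2*Gp+2*(s*t)*D+t^2*Gn)*(t^2*Gn+s*t*D) :=
            mul_le_mul_of_nonneg_right (mul_le_mul_of_nonneg_left f1 hb.le) f5
    have h4 : t^4*(A + a*D + b*(Gp+2*D+Gn)*(Gn+D)) = t^4*L := by rw [H]
    nlinarith
  have hRHS : t^p*(2*Real.log t*P + L) < t^4*L := by
    have hX : 2*Real.log t*P + L < L := by nlinarith [mul_pos hP (neg_pos.mpr hlog)]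
    have htp : (0:ℝ) < t^p := Real.rpow_pos_of_pos ht p
    rcases le_or_gt (2*Real.log t*P + L) 0 with hX0 | hX0
    · have h0 : t^p*(2*Real.log t*P + L) ≤ 0 := mul_nonpos_of_nonneg_of_nonpos htp.le hX0
      nlinarith [mul_pos ht4 hL]
    · have htp4 : t^p ≤ t^4 := by
        have h4p : ((4:ℕ):ℝ) ≤ p := by push_cast; linarith
        calc t^p ≤ t^((4:ℕ):ℝ) := Real.rpow_le_rpow_of_exponent_ge ht ht1'.le h4p
          _ = t^4 := Real.rpow_natCast t 4
      calc t^p*(2*Real.log t*P + L) ≤ t^4*(2*Real.log t*P + L) :=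
            mul_le_mul_of_nonneg_right htp4 hX0.le
        _ < t^4*L := mul_lt_mul_of_pos_left hX ht4
  linarith

end Key
set_option maxHeartbeats 1600000 in
/-- if (J′_λ(u), u^±) ≤ 0 then the projection parameters lie in (0,1],
with equality to 1 iff (J′_λ(u), u^±) = 0. -/
theorem stmt13 (a b p lam : ℝ) (ha : 0 < a) (hb : 0 < b) (hp : 6 < p) (hlam : 0 < lam)
    (h : V → ℝ) (hh : ∀ x, 0 ≤ h x) (u : V → ℝ) (hu : memH h u)
    (hup : pos u ≠ 0) (hun : neg u ≠ 0)
    (hple : Jp a b p lam h u (pos u) ≤ 0) (hnle : Jp a b p lam h u (neg u) ≤ 0) :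
    ∀ s t : ℝ, 0 < s → 0 < t →
      Jp a b p lam h (fun x => s * pos u x + t * neg u x)
        (fun x => s * pos u x) = 0 →
      Jp a b p lam h (fun x => s * pos u x + t * neg u x)
        (fun x => t * neg u x) = 0 →
      s ≤ 1 ∧ t ≤ 1 ∧
        ((s = 1 ∧ t = 1) ↔
          (Jp a b p lam h u (pos u) = 0 ∧ Jp a b p lam h u (neg u) = 0)) := by
  intro s t hs ht hEp hEn
  have hEp0 := hEp
  have hEn0 := hEn
  have hp0 : p ≠ 0 := by linarith
  -- summability facts
  have Sgs_u : Summable (fun x => gradSq u x) :=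
    Summable.of_nonneg_of_le (fun x => gradSq_nonneg u x)
      (fun x => le_add_of_nonneg_right (sq_nonneg _)) hu.1
  have Ssq_u : Summable (fun x => u x ^ 2) :=
    Summable.of_nonneg_of_le (fun x => sq_nonneg _)
      (fun x => le_add_of_nonneg_left (gradSq_nonneg u x)) hu.1
  have SgsP : Summable (fun x => gradSq (pos u) x) :=
    Summable.of_nonneg_of_le (fun x => gradSq_nonneg _ x)
      (fun x => gradSq_mono _ _ (pos_sub_abs u) x) Sgs_u
  have SgsN : Summable (fun x => gradSq (neg u) x) :=
    Summable.of_nonneg_of_le (fun x => gradSq_nonneg _ x)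
      (fun x => gradSq_mono _ _ (neg_sub_abs u) x) Sgs_u
  have SgfPN : Summable (fun x => gradForm (pos u) (neg u) x) :=
    Summable.of_nonneg_of_le (fun x => gradForm_pos_neg_nonneg u x)
      (fun x => gradForm_pos_neg_le u x) Sgs_u
  have SgfNP : Summable (fun x => gradForm (neg u) (pos u) x) :=
    SgfPN.congr fun x => (gradForm_comm _ _ _)
  have SsqP : Summable (fun x => pos u x ^ 2) :=
    Summable.of_nonneg_of_le (fun x => sq_nonneg _) (fun x => pos_sq_le u x) Ssq_u
  have SsqN : Summable (fun x => neg u x ^ 2) :=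
    Summable.of_nonneg_of_le (fun x => sq_nonneg _) (fun x => neg_sq_le u x) Ssq_u
  have hl_ge : ∀ x, (1:ℝ) ≤ hl lam h x := fun x => by
    have := hh x; simp only [hl]; nlinarith
  have hl_nonneg : ∀ x, (0:ℝ) ≤ hl lam h x := fun x => le_trans zero_le_one (hl_ge x)
  have ShlP : Summable (fun x => hl lam h x * pos u x ^ 2) := by
    refine Summable.of_nonneg_of_le (fun x => mul_nonneg (hl_nonneg x) (sq_nonneg _))
      (fun x => ?_) ((hu.2.mul_left lam).add Ssq_u)
    have h1 : pos u x ^ 2 ≤ u x ^ 2 := pos_sq_le u x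
    have h2 : 0 ≤ h x := hh x
    simp only [hl]
    nlinarith [mul_le_mul_of_nonneg_left h1 (mul_nonneg hlam.le h2)]
  have ShlN : Summable (fun x => hl lam h x * neg u x ^ 2) := by
    refine Summable.of_nonneg_of_le (fun x => mul_nonneg (hl_nonneg x) (sq_nonneg _))
      (fun x => ?_) ((hu.2.mul_left lam).add Ssq_u)
    have h1 : neg u x ^ 2 ≤ u x ^ 2 := neg_sq_le u x
    have h2 : 0 ≤ h x := hh x
    simp only [hl]
    nlinarith [mul_le_mul_of_nonneg_left h1 (mul_nonneg hlam.le h2)]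
  have SPp : Summable (fun x => |pos u x| ^ p) := summable_rpow SsqP (by linarith)
  have SPn : Summable (fun x => |neg u x| ^ p) := summable_rpow SsqN (by linarith)
  have SLp : Summable (fun x => logTerm p (pos u x)) := summable_logTerm SsqP (by linarith)
  have SLn : Summable (fun x => logTerm p (neg u x)) := summable_logTerm SsqN (by linarith)
  have hfg : ∀ x, pos u x * neg u x = 0 := pos_mul_neg u
  have hgf : ∀ x, neg u x * pos u x = 0 := fun x => by rw [mul_comm]; exact hfg x
  -- function rewrites
  have e0 : (fun x => (1:ℝ) * pos u x + (1:ℝ) * neg u x) = u := by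
    funext x; simp only [one_mul, pos, neg]; rw [max_add_min, add_zero]
  have e0n : (fun x => (1:ℝ) * neg u x + (1:ℝ) * pos u x) = u := by
    funext x; simp only [one_mul, pos, neg]; rw [min_add_max, add_zero]
  have e1 : (fun x => (1:ℝ) * pos u x) = pos u := by funext x; rw [one_mul]
  have e1n : (fun x => (1:ℝ) * neg u x) = neg u := by funext x; rw [one_mul]
  have ecomm : (fun x => s * pos u x + t * neg u x) = (fun x => t * neg u x + s * pos u x) :=
    funext fun x => add_comm _ _
  -- master identities
  have hDc : (∑' x : V, gradForm (neg u) (pos u) x) = ∑' x : V, gradForm (pos u) (neg u) x :=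
    tsum_congr fun x => gradForm_comm _ _ _
  have hidp := master a b p lam hp0 h (pos u) (neg u) hfg SgsP SgsN SgfPN ShlP SPp SLp s t hs
  have hidn := master a b p lam hp0 h (neg u) (pos u) hgf SgsN SgsP SgfNP ShlN SPn SLn t s ht
  rw [hDc] at hidn
  have hid1p := master a b p lam hp0 h (pos u) (neg u) hfg SgsP SgsN SgfPN ShlP SPp SLp 1 1 one_pos
  have hid1n := master a b p lam hp0 h (neg u) (pos u) hgf SgsN SgsP SgfNP ShlN SPn SLn 1 1 one_pos
  rw [hDc] at hid1n
  rw [e0, e1, Real.one_rpow, Real.log_one] at hid1p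
  rw [e0n, e1n, Real.one_rpow, Real.log_one] at hid1n
  -- rewrite all hypotheses into scalar form
  rw [hid1p] at hple
  rw [hid1n] at hnle
  rw [hidp] at hEp
  rw [ecomm, hidn] at hEn
  -- abbreviations
  set Ap := ∑' x : V, (a * gradSq (pos u) x + hl lam h x * pos u x ^ 2) with hApdef
  set An := ∑' x : V, (a * gradSq (neg u) x + hl lam h x * neg u x ^ 2) with hAndef
  set Gp := ∑' x : V, gradSq (pos u) x with hGpdef
  set Gn := ∑' x : V, gradSq (neg u) x with hGndef
  set D := ∑' x : V, gradForm (pos u) (neg u) x with hDdef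
  set Pp := ∑' x : V, |pos u x| ^ p with hPpdef
  set Pn := ∑' x : V, |neg u x| ^ p with hPndef
  set Lp := ∑' x : V, logTerm p (pos u x) with hLpdef
  set Ln := ∑' x : V, logTerm p (neg u x) with hLndef
  -- positivity
  obtain ⟨x0, hx0⟩ : ∃ x, pos u x ≠ 0 := by
    by_contra hc; push_neg at hc; exact hup (funext hc)
  obtain ⟨x1, hx1⟩ : ∃ x, neg u x ≠ 0 := by
    by_contra hc; push_neg at hc; exact hun (funext hc)
  have hAp : 0 < Ap := by
    rw [hApdef]
    refine Summable.tsum_pos ((SgsP.mul_left a).add ShlP) (fun x =>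
      add_nonneg (mul_nonneg ha.le (gradSq_nonneg _ x)) (mul_nonneg (hl_nonneg x) (sq_nonneg _)))
      x0 ?_
    have h1 : 0 < pos u x0 ^ 2 := by positivity
    nlinarith [mul_nonneg ha.le (gradSq_nonneg (pos u) x0), hl_ge x0]
  have hAn : 0 < An := by
    rw [hAndef]
    refine Summable.tsum_pos ((SgsN.mul_left a).add ShlN) (fun x =>
      add_nonneg (mul_nonneg ha.le (gradSq_nonneg _ x)) (mul_nonneg (hl_nonneg x) (sq_nonneg _)))
      x1 ?_
    have h1 : 0 < neg u x1 ^ 2 := by positivity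
    nlinarith [mul_nonneg ha.le (gradSq_nonneg (neg u) x1), hl_ge x1]
  have hPp : 0 < Pp := by
    rw [hPpdef]
    exact Summable.tsum_pos SPp (fun x => Real.rpow_nonneg (abs_nonneg _) _) x0
      (Real.rpow_pos_of_pos (abs_pos.mpr hx0) p)
  have hPn : 0 < Pn := by
    rw [hPndef]
    exact Summable.tsum_pos SPn (fun x => Real.rpow_nonneg (abs_nonneg _) _) x1
      (Real.rpow_pos_of_pos (abs_pos.mpr hx1) p)
  have hD : 0 ≤ D := hDdef ▸ tsum_nonneg (gradForm_pos_neg_nonneg u)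
  have hGp : 0 ≤ Gp := hGpdef ▸ tsum_nonneg (gradSq_nonneg _)
  have hGn : 0 ≤ Gn := hGndef ▸ tsum_nonneg (gradSq_nonneg _)
  -- scalar hypotheses
  have Hp : Ap + a*D + b*(Gp+2*D+Gn)*(Gp+D) ≤ Lp := by nlinarith [hple]
  have Hn : An + a*D + b*(Gn+2*D+Gp)*(Gn+D) ≤ Ln := by nlinarith [hnle]
  have Ep : s^2*Ap + s*t*(a*D) + b*(s^2*Gp+2*(s*t)*D+t^2*Gn)*(s^2*Gp+s*t*D)
      = s^p*(2*Real.log s*Pp + Lp) := by linarith [hEp]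
  have En : t^2*An + t*s*(a*D) + b*(t^2*Gn+2*(t*s)*D+s^2*Gp)*(t^2*Gn+t*s*D)
      = t^p*(2*Real.log t*Pn + Ln) := by linarith [hEn]
  -- both parameters ≤ 1
  have hst1 : s ≤ 1 ∧ t ≤ 1 := by
    rcases le_total t s with hts | hst
    · have h1 : s ≤ 1 := key_le ha hb hp hs ht hts hAp hPp hD hGp hGn Hp Ep
      exact ⟨h1, hts.trans h1⟩
    · have h1 : t ≤ 1 :=
        key_le ha hb hp ht hs hst hAn hPn hD hGn hGp Hn En
      exact ⟨hst.trans h1, h1⟩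
  refine ⟨hst1.1, hst1.2, ?_, ?_⟩
  · rintro ⟨rfl, rfl⟩
    rw [e0, e1] at hEp0
    rw [e0, e1n] at hEn0
    exact ⟨hEp0, hEn0⟩
  · rintro ⟨h1, h2⟩
    rw [hid1p] at h1
    rw [hid1n] at h2
    have HpE : Ap + a*D + b*(Gp+2*D+Gn)*(Gp+D) = Lp := by linear_combination h1
    have HnE : An + a*D + b*(Gn+2*D+Gp)*(Gn+D) = Ln := by linear_combination h2
    rcases le_total t s with hts | hst
    · have ht1 : t = 1 := key_eq (L := Ln) ha hb hp hs ht hts hst1.2 hAn hPn hD hGp hGn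
        (by linear_combination HnE) (by linear_combination En)
      exact ⟨le_antisymm hst1.1 (ht1 ▸ hts), ht1⟩
    · have hs1' : s = 1 := key_eq (L := Lp) ha hb hp ht hs hst hst1.1 hAp hPp hD hGn hGp
        (by linear_combination HpE) (by linear_combination Ep)
      exact ⟨hs1', le_antisymm hst1.2 (hs1' ▸ hst)⟩

end DiscreteKirchhoff
end
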